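/- Let Θ_∞ be the group presented on two generators x, y with relator set { Π_{j=k!+1}^{2·k!}(x·y^j), Π_{j=2·k!+1}^{3·k!−1}(x·y^j), Π_{j=3·k!+1}^{4·k!+1}(x·y^j) : k ∈ ℕ, k ≥ 5 }. Then Θ_∞ has no proper subgroup of finite index: every subgroup of Θ_∞ of finite index equals Θ_∞. (Asserted in Remark (ii) after Corollary 2.2 of the paper.) -/

import Mathlib

/-- The ordered product `(g·h^a)(g·h^{a+1})⋯(g·h^b)`. -/
def seg {G : Type*} [Group G] (g h : G) (a b : ℕ) : G :=
  ((List.range (b + 1 - a)).map (fun i => g * h ^ (a + i))).prod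

/-- The relator set of the group `Θ_∞` from Remark (ii) after Corollary 2.2. -/
def ThetaInfRels : Set (FreeGroup (Fin 2)) :=
  { w | ∃ k : ℕ, 5 ≤ k ∧
      (w = seg (FreeGroup.of 0) (FreeGroup.of 1) (Nat.factorial k + 1) (2 * Nat.factorial k) ∨
       w = seg (FreeGroup.of 0) (FreeGroup.of 1) (2 * Nat.factorial k + 1)
             (3 * Nat.factorial k - 1) ∨
       w = seg (FreeGroup.of 0) (FreeGroup.of 1) (3 * Nat.factorial k + 1)
             (4 * Nat.factorial k + 1)) }

/-- Product by length rather than right endpoint. -/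
def seg' {G : Type*} [Group G] (g h : G) (a L : ℕ) : G :=
  ((List.range L).map (fun i => g * h ^ (a + i))).prod

lemma seg_eq_seg' {G : Type*} [Group G] (g h : G) (a b : ℕ) :
    seg g h a b = seg' g h a (b + 1 - a) := rfl

lemma seg'_succ {G : Type*} [Group G] (g h : G) (a L : ℕ) :
    seg' g h a (L + 1) = seg' g h a L * (g * h ^ (a + L)) := by
  simp [seg', List.range_succ]

lemma seg'_add {G : Type*} [Group G] (g h : G) (a L₁ L₂ : ℕ) :
    seg' g h a (L₁ + L₂) = seg' g h a L₁ * seg' g h (a + L₁) L₂ := by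
  induction L₂ with
  | zero => simp [seg']
  | succ n ih =>
      rw [← Nat.add_assoc, seg'_succ, ih, seg'_succ, mul_assoc]
      ring_nf

lemma seg'_shift {G : Type*} [Group G] (g h : G) {M : ℕ} (hM : h ^ M = 1) (a L : ℕ) :
    seg' g h (a + M) L = seg' g h a L := by
  unfold seg'
  congr 1
  apply List.map_congr_left
  intro i _
  have : a + M + i = a + i + M := by ring
  rw [this, pow_add, hM, mul_one]

lemma seg'_pow {G : Type*} [Group G] (g h : G) {N : ℕ} (hN : h ^ N = 1) (m : ℕ) :
    seg' g h 1 (N * m) = (seg' g h 1 N) ^ m := by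
  induction m with
  | zero => simp [seg']
  | succ n ih =>
      have hNn : h ^ (N * n) = 1 := by rw [pow_mul, hN, one_pow]
      rw [Nat.mul_succ, seg'_add, ih, pow_succ]
      congr 1
      rw [seg'_shift g h hNn]

lemma key_lemma {F : Type*} [Group F] (g h : F) (N m : ℕ) (hN : 1 ≤ N) (hm : 1 ≤ m)
    (hhN : h ^ N = 1)
    (r1 : seg g h (N * m + 1) (2 * (N * m)) = 1)
    (r2 : seg g h (2 * (N * m) + 1) (3 * (N * m) - 1) = 1)
    (r3 : seg g h (3 * (N * m) + 1) (4 * (N * m) + 1) = 1) :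
    g = 1 ∧ h = 1 := by
  obtain ⟨N', rfl⟩ := Nat.exists_eq_add_of_le hN
  obtain ⟨m', rfl⟩ := Nat.exists_eq_add_of_le hm
  set N := 1 + N' with hNdef
  set m := 1 + m' with hmdef
  set K := N * m with hK
  have hK1 : 1 ≤ K := Nat.one_le_iff_ne_zero.mpr (by positivity)
  have hhK : h ^ K = 1 := by rw [hK, pow_mul, hhN, one_pow]
  set P := seg' g h 1 N with hP
  set Q := seg' g h 1 N' with hQ
  -- rewrite r1
  have e1 : seg g h (K + 1) (2 * K) = P ^ m := by
    rw [seg_eq_seg']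
    have : 2 * K + 1 - (K + 1) = K := by omega
    rw [this, Nat.add_comm K 1, seg'_shift g h hhK, hK, seg'_pow g h hhN]
  have h2K : h ^ (2 * K) = 1 := by rw [mul_comm, pow_mul, hhK, one_pow]
  have h3K : h ^ (3 * K) = 1 := by rw [mul_comm, pow_mul, hhK, one_pow]
  -- rewrite r2
  have e2 : seg g h (2 * K + 1) (3 * K - 1) = P ^ m' * Q := by
    rw [seg_eq_seg']
    have : 3 * K - 1 + 1 - (2 * K + 1) = K - 1 := by omega
    rw [this, Nat.add_comm (2 * K) 1, seg'_shift g h h2K]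
    have hKm : K - 1 = N * m' + N' := by
      rw [hK, hNdef, hmdef]; ring_nf; omega
    have hNm' : h ^ (N * m') = 1 := by rw [pow_mul, hhN, one_pow]
    rw [hKm, seg'_add, seg'_pow g h hhN, seg'_shift g h hNm']
  -- rewrite r3
  have e3 : seg g h (3 * K + 1) (4 * K + 1) = P ^ m * (g * h) := by
    rw [seg_eq_seg']
    have : 4 * K + 1 + 1 - (3 * K + 1) = K + 1 := by omega
    rw [this, Nat.add_comm (3 * K) 1, seg'_shift g h h3K, seg'_succ, hK,
      seg'_pow g h hhN]
    congr 2
    rw [Nat.add_comm 1 K, pow_add, hhK, one_mul, pow_one]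
  -- P = Q * g
  have hPQ : P = Q * g := by
    have hNe : N = N' + 1 := by omega
    rw [hP, hQ, hNe, seg'_succ]
    congr 1
    have h1N : (1 : ℕ) + N' = N := by omega
    rw [h1N, hhN, mul_one]
  rw [e1] at r1
  rw [e2] at r2
  rw [e3] at r3
  -- algebra
  have hQeq : Q = (P ^ m')⁻¹ := eq_inv_of_mul_eq_one_right r2
  have h1 : P ^ m' * (Q * g) = P ^ m := by
    rw [← hPQ, ← pow_succ]; congr 1; omega
  rw [hQeq, r1, ← mul_assoc, mul_inv_cancel, one_mul] at h1
  have hg : g = 1 := h1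
  have hgh : g * h = 1 := by
    have := r3
    rw [r1, one_mul] at this
    exact this
  refine ⟨hg, ?_⟩
  rw [hg, one_mul] at hgh
  exact hgh

lemma map_seg {G H : Type*} [Group G] [Group H] (f : G →* H) (g h : G) (a b : ℕ) :
    f (seg g h a b) = seg (f g) (f h) a b := by
  unfold seg
  rw [← List.prod_hom _ f, List.map_map]
  congr 1
  apply List.map_congr_left
  intro i _
  simp [map_mul, map_pow]

/-- `Θ_∞` has no proper subgroup of finite index. -/
theorem stmt13 :
    ∀ H : Subgroup (PresentedGroup ThetaInfRels), H.index ≠ 0 → H = ⊤ := by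
  intro H hH
  haveI : H.FiniteIndex := ⟨hH⟩
  set G := PresentedGroup ThetaInfRels with hG
  set φ := MulAction.toPermHom G (G ⧸ H) with hφ
  set F := Equiv.Perm (G ⧸ H) with hF
  haveI : Finite (G ⧸ H) := Subgroup.finite_quotient_of_finiteIndex
  set mk : FreeGroup (Fin 2) →* G :=
    QuotientGroup.mk' (Subgroup.normalClosure ThetaInfRels) with hmk
  set ψ := φ.comp mk with hψ
  set n := Nat.card F with hn
  have hn1 : 1 ≤ n := Nat.one_le_iff_ne_zero.mpr
    (Nat.card_ne_zero.mpr ⟨inferInstance, inferInstance⟩)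
  set k := max 5 n with hk
  have hk5 : 5 ≤ k := le_max_left _ _
  have hnk : n ∣ Nat.factorial k := Nat.dvd_factorial hn1 (le_max_right _ _)
  obtain ⟨m, hmfac⟩ := hnk
  have hm1 : 1 ≤ m := by
    rcases Nat.eq_zero_or_pos m with h0 | h
    · exfalso
      rw [h0, mul_zero] at hmfac
      have := Nat.factorial_pos k
      omega
    · exact h
  -- the relators vanish under ψ
  have hrel : ∀ w ∈ ThetaInfRels, ψ w = 1 := by
    intro w hw
    have : mk w = 1 := (QuotientGroup.eq_one_iff w).mpr (Subgroup.subset_normalClosure hw)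
    simp [hψ, MonoidHom.comp_apply, this]
  set X := ψ (FreeGroup.of 0) with hX
  set Y := ψ (FreeGroup.of 1) with hY
  have hYn : Y ^ n = 1 := pow_card_eq_one'
  have key : X = 1 ∧ Y = 1 := by
    apply key_lemma X Y n m hn1 hm1 hYn
    · have h1 : seg (FreeGroup.of 0) (FreeGroup.of 1)
          (Nat.factorial k + 1) (2 * Nat.factorial k) ∈ ThetaInfRels :=
        ⟨k, hk5, Or.inl rfl⟩
      have := hrel _ h1
      rw [map_seg] at this
      rwa [← hmfac]
    · have h1 : seg (FreeGroup.of 0) (FreeGroup.of 1)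
          (2 * Nat.factorial k + 1) (3 * Nat.factorial k - 1) ∈ ThetaInfRels :=
        ⟨k, hk5, Or.inr (Or.inl rfl)⟩
      have := hrel _ h1
      rw [map_seg] at this
      rwa [← hmfac]
    · have h1 : seg (FreeGroup.of 0) (FreeGroup.of 1)
          (3 * Nat.factorial k + 1) (4 * Nat.factorial k + 1) ∈ ThetaInfRels :=
        ⟨k, hk5, Or.inr (Or.inr rfl)⟩
      have := hrel _ h1
      rw [map_seg] at this
      rwa [← hmfac]
  -- ψ is trivial on generators, hence trivial
  have hψ1 : ψ = 1 := by
    apply FreeGroup.ext_hom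
    intro i
    fin_cases i
    · simpa using key.1
    · simpa using key.2
  -- hence φ is trivial
  have hφ1 : ∀ g : G, φ g = 1 := by
    intro g
    obtain ⟨w, rfl⟩ : ∃ w, mk w = g := by
      obtain ⟨w, hw⟩ := QuotientGroup.mk'_surjective
        (Subgroup.normalClosure ThetaInfRels) g
      exact ⟨w, hw⟩
    have : ψ w = 1 := by rw [hψ1]; rfl
    simpa [hψ, MonoidHom.comp_apply] using this
  have hker : φ.ker = ⊤ := by
    rw [Subgroup.eq_top_iff']
    intro g
    exact hφ1 g
  have hcore : H.normalCore = ⊤ := by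
    rw [Subgroup.normalCore_eq_ker, ← hφ]
    exact hker
  have := H.normalCore_le
  rw [hcore] at this
  exact top_le_iff.mp this
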